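/- Let θ ∈ ℕ. If cnt(P) + max(|P.D|·|P.T|, |P.O|·|P.T|, |P.O|·|P.D|) ≤ θ, then for every minimal generalization CandP of P (obtained by adding one atomic region to O or D, or one atomic timeslot to T), cnt(CandP) ≤ θ. -/
import Mathlib


open Finset

lemma aux_card {α : Type*} [DecidableEq α] (S X Y : Finset α) :
    (S ∩ X).card ≤ (S ∩ Y).card + (X \ Y).card := by
  calc (S ∩ X).card ≤ ((S ∩ Y) ∪ (X \ Y)).card := by
        apply card_le_card
        intro a ha
        simp only [mem_inter, mem_union, mem_sdiff] at *
        by_cases hy : a ∈ Y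
        · exact Or.inl ⟨ha.1, hy⟩
        · exact Or.inr ⟨ha.2, hy⟩
    _ ≤ (S ∩ Y).card + (X \ Y).card := card_union_le _ _

/-- Pruning condition (Lemma 2 of the paper): if cnt(P) plus the maximum of the
three products is at most θ, then every minimal generalization of P has
count at most θ. -/
theorem stmt_6 (V Tm : Type*) [Fintype V] [DecidableEq V] [Fintype Tm] [DecidableEq Tm]
    (S : Finset (V × V × Tm))
    (O D : Finset V) (T : Finset Tm) (θ : ℕ)
    (h : (S ∩ (O ×ˢ D ×ˢ T)).card +
      max (D.card * T.card) (max (O.card * T.card) (O.card * D.card)) ≤ θ) :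
    (∀ r : V, r ∉ O ∪ D →
      (S ∩ ((insert r O) ×ˢ D ×ˢ T)).card ≤ θ ∧
      (S ∩ (O ×ˢ (insert r D) ×ˢ T)).card ≤ θ) ∧
    (∀ t : Tm, t ∉ T →
      (S ∩ (O ×ˢ D ×ˢ (insert t T))).card ≤ θ) := by
  constructor
  · intro r hr
    constructor
    · refine le_trans (le_trans (aux_card S _ (O ×ˢ D ×ˢ T)) ?_) h
      apply Nat.add_le_add_left
      refine le_trans ?_ (le_max_left _ _)
      calc ((insert r O ×ˢ D ×ˢ T) \ (O ×ˢ D ×ˢ T)).card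
          ≤ ({r} ×ˢ D ×ˢ T).card := by
            apply card_le_card
            intro a ha
            simp only [mem_sdiff, mem_product, mem_insert, mem_singleton] at *
            obtain ⟨⟨h1, h2, h3⟩, h4⟩ := ha
            refine ⟨?_, h2, h3⟩
            rcases h1 with h1 | h1
            · exact h1
            · exact absurd ⟨h1, h2, h3⟩ h4
        _ ≤ D.card * T.card := by simp [card_product]
    · refine le_trans (le_trans (aux_card S _ (O ×ˢ D ×ˢ T)) ?_) h
      apply Nat.add_le_add_left
      refine le_trans ?_ (le_trans (le_max_left _ _) (le_max_right _ _))
      calc ((O ×ˢ insert r D ×ˢ T) \ (O ×ˢ D ×ˢ T)).card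
          ≤ (O ×ˢ ({r} : Finset V) ×ˢ T).card := by
            apply card_le_card
            intro a ha
            simp only [mem_sdiff, mem_product, mem_insert, mem_singleton] at *
            obtain ⟨⟨h1, h2, h3⟩, h4⟩ := ha
            refine ⟨h1, ?_, h3⟩
            rcases h2 with h2 | h2
            · exact h2
            · exact absurd ⟨h1, h2, h3⟩ h4
        _ ≤ O.card * T.card := by simp [card_product]
  · intro t ht
    refine le_trans (le_trans (aux_card S _ (O ×ˢ D ×ˢ T)) ?_) h
    apply Nat.add_le_add_left
    refine le_trans ?_ (le_trans (le_max_right _ _) (le_max_right _ _))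
    calc ((O ×ˢ D ×ˢ insert t T) \ (O ×ˢ D ×ˢ T)).card
        ≤ (O ×ˢ D ×ˢ ({t} : Finset Tm)).card := by
          apply card_le_card
          intro a ha
          simp only [mem_sdiff, mem_product, mem_insert, mem_singleton] at *
          obtain ⟨⟨h1, h2, h3⟩, h4⟩ := ha
          refine ⟨h1, h2, ?_⟩
          rcases h3 with h3 | h3
          · exact h3
          · exact absurd ⟨h1, h2, h3⟩ h4
      _ ≤ O.card * D.card := by simp [card_product]
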